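/- (Counting of green nodes at depth 0.) Let l ≥ 2, let m, n ≥ 2l − 3, and set N = m + n − l. Then the number of Brauer representation triples γ for the pair (m,n) with ht(γ) ≤ N which possess at least one N-excluded ancestor equals Z_univ(l − 1). -/

import Mathlib

/-!
Along the parent relation the quantity `ht γ + k` never increases: a step of type (a) removes a
box from `γ₋`, and a step of type (b) trades one unit of `k` for at most one new row of `γ₊`.
Turning all `k` pairs into new rows `1` of `γ₊` reaches an ancestor of height `ht γ + k`, so a
triple with `ht γ ≤ N` has an `N`-excluded ancestor iff `N < ht γ + k`. Deleting the first
columns of `γ₊` and `γ₋` then identifies these triples with the quadruples `(Δ, j, λ₁, λ₂)`,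
where `Δ = N + 1 - ht γ` and `j = ht γ + k - (N + 1)`, so that `k = Δ + j`.
-/

/-- A Brauer representation triple for the pair `(m, n)`: a natural number
`k ≤ min m n`, a partition `γ₊` of `m - k` and a partition `γ₋` of `n - k`. -/
structure BRT (m n : ℕ) where
  k : ℕ
  k_le : k ≤ min m n
  gp : Nat.Partition (m - k)
  gm : Nat.Partition (n - k)

namespace BRT

/-- The height of a Brauer representation triple: the total number of parts of the
two partitions (the sum of the first-column lengths of the Young diagrams). -/
def ht {m n : ℕ} (γ : BRT m n) : ℕ :=
  Multiset.card γ.gp.parts + Multiset.card γ.gm.parts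

end BRT

/-- `AddBox lam mu` : the multiset of parts `mu` is obtained from the multiset of parts
`lam` by adding one box to the Young diagram (either as a new part equal to `1`, or by
increasing one existing part by `1`). -/
def AddBox (lam mu : Multiset ℕ) : Prop :=
  mu = 1 ::ₘ lam ∨ ∃ a ∈ lam, mu = (a + 1) ::ₘ lam.erase a

/-- `γ'` (a triple at depth `d+1`) is a parent of `γ` (a triple at depth `d`):
either (a) `k' = k`, `γ₊' = γ₊` and `γ₋` is obtained from `γ₋'` by adding one box, or
(b) `k' = k - 1`, `γ₋' = γ₋` and `γ₊'` is obtained from `γ₊` by adding one box. -/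
def IsParent {m n₁ n₂ : ℕ} (γ : BRT m n₁) (γ' : BRT m n₂) : Prop :=
  (γ'.k = γ.k ∧ γ'.gp.parts = γ.gp.parts ∧ AddBox γ'.gm.parts γ.gm.parts)
  ∨ (γ'.k = γ.k - 1 ∧ γ'.gm.parts = γ.gm.parts ∧ AddBox γ.gp.parts γ'.gp.parts)

/-- `IsAncestor m n d d' γ γ'` : the triple `γ'` at depth `d'` for the pair `(m,n)` is an
ancestor of the triple `γ` at depth `d`, i.e. `γ'` is reachable from `γ` by iterating
the parent relation `d' - d` times (one step for each unit increase of depth). -/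
inductive IsAncestor (m n : ℕ) : ∀ (d d' : ℕ), BRT m (n - d) → BRT m (n - d') → Prop
  | step {d : ℕ} (γ : BRT m (n - d)) (γ' : BRT m (n - (d + 1))) :
      IsParent γ γ' → IsAncestor m n d (d + 1) γ γ'
  | tail {d d' : ℕ} {γ : BRT m (n - d)} {γ' : BRT m (n - d')} (γ'' : BRT m (n - (d' + 1))) :
      IsAncestor m n d d' γ γ' → IsParent γ' γ'' → IsAncestor m n d (d' + 1) γ γ''

/-- `Zuniv s` : the number of quadruples `(Δ, k, λ₁, λ₂)` with `Δ ≥ 1`, `k ≥ 0` natural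
numbers and `λ₁, λ₂` partitions (of arbitrary natural numbers) such that
`Δ + 2k + |λ₁| + |λ₂| = s`. -/
noncomputable def Zuniv (s : ℕ) : ℕ :=
  Nat.card {q : (ℕ × ℕ) × (Σ a : ℕ, Nat.Partition a) × (Σ a : ℕ, Nat.Partition a) //
    1 ≤ q.1.1 ∧ q.1.1 + 2 * q.1.2 + q.2.1.1 + q.2.2.1 = s}

/-- `p a` : the number of partitions of `a` (with `p 0 = 1`). -/
def p (a : ℕ) : ℕ := Fintype.card (Nat.Partition a)

open Multiset

namespace Nat.Partition

theorem card_parts_le {n : ℕ} (π : n.Partition) : card π.parts ≤ n := by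
  simpa [π.parts_sum] using card_nsmul_le_sum (a := 1) fun _ hx => π.parts_pos hx

theorem sigma_ext {x y : Σ a : ℕ, a.Partition} (h : x.2.parts = y.2.parts) : x = y := by
  obtain ⟨a, π⟩ := x
  obtain ⟨b, ρ⟩ := y
  obtain rfl : a = b := by rw [← π.parts_sum, ← ρ.parts_sum, h]
  exact congrArg (Sigma.mk a) (Nat.Partition.ext h)

def addFirstColumn {a n : ℕ} (π : a.Partition) (c : ℕ) (hc : card π.parts ≤ c)
    (hn : a + c = n) : n.Partition where
  parts := π.parts.map (· + 1) + replicate (c - card π.parts) 1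
  parts_pos {x} hx := by
    rcases mem_add.1 hx with hx | hx
    · obtain ⟨y, -, rfl⟩ := mem_map.1 hx
      exact y.succ_pos
    · rw [eq_of_mem_replicate hx]
      exact one_pos
  parts_sum := by
    simp only [sum_add, sum_map_add, map_id', π.parts_sum, map_const', sum_replicate, smul_eq_mul]
    omega

theorem card_addFirstColumn {a n : ℕ} (π : a.Partition) (c : ℕ) (hc : card π.parts ≤ c)
    (hn : a + c = n) : card (π.addFirstColumn c hc hn).parts = c := by
  simp only [addFirstColumn, card_add, card_map, card_replicate]
  omega

theorem map_sub_one_filter_add_replicate {n : ℕ} (π : n.Partition) :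
    ((π.parts.filter (1 < ·)).map (· - 1)).map (· + 1)
      + replicate (card π.parts - card (π.parts.filter (1 < ·))) 1 = π.parts := by
  have hbig : ((π.parts.filter (1 < ·)).map (· - 1)).map (· + 1) = π.parts.filter (1 < ·) := by
    rw [map_map]
    refine (map_congr rfl fun x hx => ?_).trans (map_id _)
    have := (mem_filter.1 hx).2
    simp only [Function.comp_apply, id]
    omega
  have hones : π.parts.filter (¬ 1 < ·) = replicate (card (π.parts.filter (¬ 1 < ·))) 1 :=
    eq_replicate.2 ⟨rfl, fun b hb => by
      have := π.parts_pos (mem_filter.1 hb).1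
      have := (mem_filter.1 hb).2
      omega⟩
  have hcard := congrArg card (filter_add_not (1 < ·) π.parts)
  rw [card_add] at hcard
  rw [hbig, show card π.parts - card (π.parts.filter (1 < ·))
    = card (π.parts.filter (¬ 1 < ·)) by omega, ← hones, filter_add_not]

def removeFirstColumn {n : ℕ} (π : n.Partition) : (n - card π.parts).Partition where
  parts := (π.parts.filter (1 < ·)).map (· - 1)
  parts_pos {x} hx := by
    obtain ⟨y, hy, rfl⟩ := mem_map.1 hx
    have := (mem_filter.1 hy).2
    omega
  parts_sum := by
    have hsum := congrArg sum π.map_sub_one_filter_add_replicate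
    have hle := card_le_card (filter_le (1 < ·) π.parts)
    simp only [sum_add, sum_map_add, map_id', map_const', sum_replicate, smul_eq_mul,
      card_map, π.parts_sum] at hsum
    omega

theorem removeFirstColumn_addFirstColumn {a n : ℕ} (π : a.Partition) (c : ℕ)
    (hc : card π.parts ≤ c) (hn : a + c = n) :
    (π.addFirstColumn c hc hn).removeFirstColumn.parts = π.parts := by
  have hpos : ∀ x ∈ π.parts.map (· + 1), 1 < x := by
    intro x hx
    obtain ⟨y, hy, rfl⟩ := mem_map.1 hx
    have := π.parts_pos hy
    omega
  have hones : (replicate (c - card π.parts) 1).filter (1 < ·) = 0 :=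
    filter_eq_nil.2 fun x hx => by rw [eq_of_mem_replicate hx]; omega
  simp only [removeFirstColumn, addFirstColumn, filter_add, filter_eq_self.2 hpos, hones,
    add_zero, map_map]
  refine (map_congr rfl fun x _ => ?_).trans (map_id _)
  simp

theorem addFirstColumn_removeFirstColumn {n n' : ℕ} (π : n.Partition) (c : ℕ)
    (hc : card π.removeFirstColumn.parts ≤ c) (hn : n - card π.parts + c = n')
    (h : c = card π.parts) :
    (π.removeFirstColumn.addFirstColumn c hc hn).parts = π.parts := by
  subst h
  simpa [addFirstColumn, removeFirstColumn] using π.map_sub_one_filter_add_replicate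

end Nat.Partition

theorem AddBox.sum_eq {lam mu : Multiset ℕ} (h : AddBox lam mu) : mu.sum = lam.sum + 1 := by
  rcases h with rfl | ⟨a, ha, rfl⟩
  · simp [add_comm]
  · rw [sum_cons, ← sum_erase ha]
    ring

theorem AddBox.card_le {lam mu : Multiset ℕ} (h : AddBox lam mu) : card lam ≤ card mu := by
  rcases h with rfl | ⟨a, ha, rfl⟩
  · exact card_le_card (le_cons_self lam 1)
  · rw [card_cons, card_erase_add_one ha]

theorem AddBox.card_le_add_one {lam mu : Multiset ℕ} (h : AddBox lam mu) :
    card mu ≤ card lam + 1 := by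
  rcases h with rfl | ⟨a, ha, rfl⟩
  · rw [card_cons]
  · rw [card_cons, card_erase_add_one ha]
    omega

namespace BRT

theorem ext {m n : ℕ} {γ γ' : BRT m n} (hk : γ.k = γ'.k) (hp : γ.gp.parts = γ'.gp.parts)
    (hm : γ.gm.parts = γ'.gm.parts) : γ = γ' := by
  obtain ⟨k, _, gp, gm⟩ := γ
  obtain ⟨k', _, gp', gm'⟩ := γ'
  obtain rfl : k = k' := hk
  congr
  exacts [Nat.Partition.ext hp, Nat.Partition.ext hm]

theorem k_le_left {m n : ℕ} (γ : BRT m n) : γ.k ≤ m := γ.k_le.trans (min_le_left m n)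

theorem k_le_right {m n : ℕ} (γ : BRT m n) : γ.k ≤ n := γ.k_le.trans (min_le_right m n)

end BRT

theorem IsParent.ht_add_k_le {m n₁ n₂ : ℕ} {γ : BRT m n₁} {γ' : BRT m n₂} (h : IsParent γ γ') :
    γ'.ht + γ'.k ≤ γ.ht + γ.k := by
  unfold BRT.ht
  rcases h with ⟨hk, hp, hbox⟩ | ⟨hk, hm, hbox⟩
  · have := hbox.card_le
    rw [hp]
    omega
  · -- the sizes force `γ.k ≥ 1`, so `γ'.k = γ.k - 1` is a genuine decrement
    have hsum := hbox.sum_eq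
    have := hbox.card_le_add_one
    have := γ.k_le_left
    have := γ'.k_le_left
    rw [γ.gp.parts_sum, γ'.gp.parts_sum] at hsum
    rw [hm]
    omega

theorem IsAncestor.ht_add_k_le {m n d d' : ℕ} {γ : BRT m (n - d)} {γ' : BRT m (n - d')}
    (h : IsAncestor m n d d' γ γ') : γ'.ht + γ'.k ≤ γ.ht + γ.k := by
  induction h with
  | step _ _ hp => exact hp.ht_add_k_le
  | tail _ _ hp ih => exact hp.ht_add_k_le.trans ih

/-- The parent obtained by turning one of the `k` contracted pairs into a new row `1` of `γ₊`. -/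
def BRT.parentNewRow {m n₁ : ℕ} (γ : BRT m n₁) (n₂ : ℕ) (hk : 0 < γ.k) (hn : n₂ = n₁ - 1) :
    BRT m n₂ where
  k := γ.k - 1
  k_le := le_min (by have := γ.k_le_left; omega) (by have := γ.k_le_right; omega)
  gp := ⟨1 ::ₘ γ.gp.parts, by
    intro x hx
    rcases mem_cons.1 hx with rfl | hx
    exacts [one_pos, γ.gp.parts_pos hx], by
    have := γ.k_le_left
    rw [sum_cons, γ.gp.parts_sum]
    omega⟩
  gm := ⟨γ.gm.parts, γ.gm.parts_pos, by
    have := γ.k_le_right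
    rw [γ.gm.parts_sum]
    omega⟩

theorem BRT.isParent_parentNewRow {m n₁ : ℕ} (γ : BRT m n₁) (n₂ : ℕ) (hk : 0 < γ.k)
    (hn : n₂ = n₁ - 1) : IsParent γ (γ.parentNewRow n₂ hk hn) :=
  Or.inr ⟨rfl, rfl, Or.inl rfl⟩

theorem BRT.ht_parentNewRow {m n₁ : ℕ} (γ : BRT m n₁) (n₂ : ℕ) (hk : 0 < γ.k)
    (hn : n₂ = n₁ - 1) : (γ.parentNewRow n₂ hk hn).ht = γ.ht + 1 := by
  simp only [BRT.ht, BRT.parentNewRow, card_cons]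
  ring

theorem BRT.exists_isAncestor_ht_eq {m n d : ℕ} (γ : BRT m (n - d)) {i : ℕ} (hi : 1 ≤ i)
    (hik : i ≤ γ.k) : ∃ γ' : BRT m (n - (d + i)),
      IsAncestor m n d (d + i) γ γ' ∧ γ'.k = γ.k - i ∧ γ'.ht = γ.ht + i := by
  induction i, hi using Nat.le_induction with
  | base =>
    have hn : n - (d + 1) = n - d - 1 := by omega
    exact ⟨_, .step _ _ (γ.isParent_parentNewRow _ hik hn), rfl, γ.ht_parentNewRow _ hik hn⟩
  | succ i _ ih =>
    obtain ⟨γ', hanc, hk, hht⟩ := ih (by omega)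
    have hn : n - (d + (i + 1)) = n - (d + i) - 1 := by omega
    have hk' : 0 < γ'.k := by omega
    refine ⟨_, .tail _ hanc (γ'.isParent_parentNewRow _ hk' hn), ?_, ?_⟩
    · simp only [BRT.parentNewRow, hk]
      omega
    · rw [γ'.ht_parentNewRow, hht]
      ring

theorem BRT.exists_isAncestor_lt_ht_iff {m n d N : ℕ} (γ : BRT m (n - d)) (hγ : γ.ht ≤ N) :
    (∃ d', ∃ γ' : BRT m (n - d'), IsAncestor m n d d' γ γ' ∧ N < γ'.ht) ↔ N < γ.ht + γ.k := by
  constructor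
  · rintro ⟨d', γ', hanc, hlt⟩
    have := hanc.ht_add_k_le
    omega
  · intro hlt
    obtain ⟨γ', hanc, -, hht⟩ := γ.exists_isAncestor_ht_eq (i := γ.k) (by omega) le_rfl
    exact ⟨_, γ', hanc, by omega⟩

/-- The triple with `k` contracted pairs whose partitions, after deleting their first
columns, are `μ₁` and `μ₂`. -/
def BRT.ofCores {m n : ℕ} (k : ℕ) (μ₁ μ₂ : Σ a : ℕ, a.Partition)
    (h₁ : k + μ₁.1 + card μ₁.2.parts ≤ m) (h₂ : k + μ₂.1 + card μ₂.2.parts ≤ n) : BRT m n where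
  k := k
  k_le := le_min (by omega) (by omega)
  gp := μ₁.2.addFirstColumn (m - k - μ₁.1) (by omega) (by omega)
  gm := μ₂.2.addFirstColumn (n - k - μ₂.1) (by omega) (by omega)

theorem BRT.ht_ofCores {m n : ℕ} (k : ℕ) (μ₁ μ₂ : Σ a : ℕ, a.Partition)
    (h₁ : k + μ₁.1 + card μ₁.2.parts ≤ m) (h₂ : k + μ₂.1 + card μ₂.2.parts ≤ n) :
    (BRT.ofCores k μ₁ μ₂ h₁ h₂).ht = (m - k - μ₁.1) + (n - k - μ₂.1) := by
  simp only [BRT.ht, BRT.ofCores, Nat.Partition.card_addFirstColumn]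

theorem BRT.k_ofCores {m n : ℕ} (k : ℕ) (μ₁ μ₂ : Σ a : ℕ, a.Partition)
    (h₁ : k + μ₁.1 + card μ₁.2.parts ≤ m) (h₂ : k + μ₂.1 + card μ₂.2.parts ≤ n) :
    (BRT.ofCores k μ₁ μ₂ h₁ h₂).k = k :=
  rfl

/-- The bounds `2 * l - 3 ≤ m, n` are what leave room in `invFun` to put the first columns
back. -/
def BRT.equivZunivQuadruples (m n l : ℕ) (hm : 2 * l - 3 ≤ m) (hn : 2 * l - 3 ≤ n) :
    {γ : BRT m n // γ.ht ≤ m + n - l ∧ m + n - l < γ.ht + γ.k} ≃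
      {q : (ℕ × ℕ) × (Σ a : ℕ, a.Partition) × (Σ a : ℕ, a.Partition) //
        1 ≤ q.1.1 ∧ q.1.1 + 2 * q.1.2 + q.2.1.1 + q.2.2.1 = l - 1} where
  toFun γ := ⟨((m + n - l + 1 - γ.1.ht, γ.1.ht + γ.1.k - (m + n - l + 1)),
      ⟨_, γ.1.gp.removeFirstColumn⟩, ⟨_, γ.1.gm.removeFirstColumn⟩), by
    obtain ⟨γ, hle, hlt⟩ := γ
    have := γ.gp.card_parts_le
    have := γ.gm.card_parts_le
    have := γ.k_le_left
    have := γ.k_le_right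
    simp only [BRT.ht] at hle hlt ⊢
    omega⟩
  invFun q := ⟨BRT.ofCores (q.1.1.1 + q.1.1.2) q.1.2.1 q.1.2.2
      (by have := q.1.2.1.2.card_parts_le; omega) (by have := q.1.2.2.2.card_parts_le; omega), by
    have := q.2
    rw [BRT.ht_ofCores, BRT.k_ofCores]
    omega⟩
  left_inv γ := by
    obtain ⟨γ, hle, hlt⟩ := γ
    have := γ.gp.card_parts_le
    have := γ.gm.card_parts_le
    have hht : γ.ht = card γ.gp.parts + card γ.gm.parts := rfl
    refine Subtype.ext (BRT.ext ?_ ?_ ?_) <;> dsimp only [BRT.ofCores]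
    · omega
    · exact γ.gp.addFirstColumn_removeFirstColumn _ _ _ (by omega)
    · exact γ.gm.addFirstColumn_removeFirstColumn _ _ _ (by omega)
  right_inv q := by
    obtain ⟨⟨⟨Δ, j⟩, μ₁, μ₂⟩, hΔ, hsum⟩ := q
    dsimp only at hΔ hsum
    refine Subtype.ext (Prod.ext (Prod.ext ?_ ?_) (Prod.ext ?_ ?_))
    · dsimp only
      rw [BRT.ht_ofCores]
      omega
    · dsimp only
      rw [BRT.ht_ofCores, BRT.k_ofCores]
      omega
    all_goals
      refine Nat.Partition.sigma_ext ?_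
      dsimp only [BRT.ofCores]
      exact Nat.Partition.removeFirstColumn_addFirstColumn _ _ _ _

theorem stmt14_general (m n l : ℕ) (hm : 2 * l - 3 ≤ m) (hn : 2 * l - 3 ≤ n) :
    Nat.card {γ : BRT m (n - 0) //
        γ.ht ≤ m + n - l ∧
        ∃ d' : ℕ, ∃ γ' : BRT m (n - d'),
          IsAncestor m n 0 d' γ γ' ∧ m + n - l < γ'.ht}
      = Zuniv (l - 1) :=
  Nat.card_congr <| (Equiv.subtypeEquivRight fun γ =>
      and_congr_right fun hγ => γ.exists_isAncestor_lt_ht_iff hγ).trans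
    (BRT.equivZunivQuadruples m n l hm hn)

/-- Counting of green nodes at depth `0`: for `l ≥ 2`, `m, n ≥ 2l - 3` and
`N = m + n - l`, the number of Brauer representation triples `γ` for the pair `(m,n)`
with `ht(γ) ≤ N` which possess at least one `N`-excluded ancestor equals
`Z_univ(l - 1)`. -/
theorem stmt14 (m n l : ℕ) (hl : 2 ≤ l) (hm : 2 * l - 3 ≤ m) (hn : 2 * l - 3 ≤ n) :
    Nat.card {γ : BRT m (n - 0) //
        γ.ht ≤ m + n - l ∧
        ∃ d' : ℕ, ∃ γ' : BRT m (n - d'),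
          IsAncestor m n 0 d' γ γ' ∧ m + n - l < γ'.ht}
      = Zuniv (l - 1) :=
  stmt14_general m n l hm hn
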